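/- No formula can contain (as a subterm) a numeral whose value is greater than or equal to the Gödel number of the formula itself, when numerals are coded as in Gödel's scheme. -/

import Mathlib

/-- The i-th prime (0-indexed position in the string: p 0 = 2). -/
noncomputable def nthPrime (i : ℕ) : ℕ := Nat.nth Nat.Prime i

/-- Prime-power code of a string of symbol codes: `∏_{i<k} p_{i+1}^{c_i}`. -/
noncomputable def strCode (cs : List ℕ) : ℕ :=
  ∏ i ∈ Finset.range cs.length, (nthPrime i) ^ (cs.getD i 0)

lemma two_pow_le_strCode (cs : List ℕ) (h : ∀ x ∈ cs, 1 ≤ x) :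
    2 ^ cs.length ≤ strCode cs := by
  rw [strCode]
  calc 2 ^ cs.length = ∏ _i ∈ Finset.range cs.length, 2 := by
        simp [Finset.prod_const]
    _ ≤ _ := ?_
  apply Finset.prod_le_prod
  · intros; positivity
  · intro i hi
    rw [Finset.mem_range] at hi
    have hp : (nthPrime i).Prime := Nat.prime_nth_prime i
    calc 2 = 2 ^ 1 := (pow_one 2).symm
      _ ≤ (nthPrime i) ^ 1 := Nat.pow_le_pow_left hp.two_le 1
      _ ≤ (nthPrime i) ^ (cs.getD i 0) := by
          apply Nat.pow_le_pow_right hp.pos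
          rw [List.getD_eq_getElem cs 0 hi]
          exact h _ (cs.getElem_mem hi)

/-- If a string `F` contains the numeral `S^q 0` (symbols `S`, `0` having
codes 3, 1 respectively) as a contiguous substring, then `q < code F`. -/
theorem numeral_lt_code {α : Type*} (c : α → ℕ) (hc : ∀ a, 1 ≤ c a)
    (zS z0 : α) (hS : c zS = 3) (h0 : c z0 = 1)
    (q : ℕ) (A B F : List α)
    (hF : F = A ++ (List.replicate q zS ++ [z0]) ++ B) :
    q < strCode (F.map c) := by
  have hlen : q + 1 ≤ (F.map c).length := by
    simp [hF]; omega
  have h1 : ∀ x ∈ F.map c, 1 ≤ x := by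
    intro x hx
    rcases List.mem_map.mp hx with ⟨a, _, rfl⟩
    exact hc a
  calc q < 2 ^ q := Nat.lt_two_pow_self (n := q)
    _ ≤ 2 ^ (F.map c).length := Nat.pow_le_pow_right (by norm_num) (by omega)
    _ ≤ strCode (F.map c) := two_pow_le_strCode _ h1
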